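/- The interval map T preserves Lebesgue measure: for every Borel set A ⊆ [0,1), Leb(T⁻¹(A)) = Leb(A). -/

import Mathlib

open MeasureTheory Set Filter

noncomputable section

namespace Gouezel

/-- `b a n = 4 * ∑_{k=1}^n a_k` (left endpoints of the intervals `I_n`). -/
def b (a : ℕ → ℝ) (n : ℕ) : ℝ := 4 * ∑ k ∈ Finset.range n, a (k + 1)

/-- `b_∞ = 4 * ∑_{n=1}^∞ a_n`. -/
def binf (a : ℕ → ℝ) : ℝ := 4 * ∑' n : ℕ, a (n + 1)

/-- The length `|J| = 1 - b_∞` of the interval `J = [b_∞, 1)`. -/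
def lenJ (a : ℕ → ℝ) : ℝ := 1 - binf a

/-- `v_n'(x) = a_n (1 + 2 cos²(2π n⁴ x))`. -/
def vd (a : ℕ → ℝ) (n : ℕ) (x : ℝ) : ℝ :=
  a n * (1 + 2 * Real.cos (2 * Real.pi * (n : ℝ) ^ 4 * x) ^ 2)

/-- `w_n'(x) = a_n (1 + 2 sin²(2π n⁴ x))`. -/
def wd (a : ℕ → ℝ) (n : ℕ) (x : ℝ) : ℝ :=
  a n * (1 + 2 * Real.sin (2 * Real.pi * (n : ℝ) ^ 4 * x) ^ 2)

/-- The inverse branch `v_n(x) = b_{n-1} + ∫_0^x v_n'(t) dt`. -/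
def v (a : ℕ → ℝ) (n : ℕ) (x : ℝ) : ℝ := b a (n - 1) + ∫ t in (0:ℝ)..x, vd a n t

/-- The inverse branch `w_n(x) = b_{n-1} + 2 a_n + ∫_0^x w_n'(t) dt`. -/
def w (a : ℕ → ℝ) (n : ℕ) (x : ℝ) : ℝ :=
  b a (n - 1) + 2 * a n + ∫ t in (0:ℝ)..x, wd a n t

/-- The affine inverse branches `u_j(x) = b_∞ + (j-1)|J|/N + (|J|/N) x`, `1 ≤ j ≤ N`. -/
def u (a : ℕ → ℝ) (N : ℕ) (j : ℕ) (x : ℝ) : ℝ :=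
  binf a + ((j : ℝ) - 1) * (lenJ a / N) + (lenJ a / N) * x

/-- The transfer operator on complex-valued functions. -/
def L (a : ℕ → ℝ) (N : ℕ) (f : ℝ → ℂ) (x : ℝ) : ℂ :=
  (∑' n : ℕ, ((vd a (n + 1) x : ℂ) * f (v a (n + 1) x)
      + (wd a (n + 1) x : ℂ) * f (w a (n + 1) x)))
    + ((lenJ a / (N : ℝ) : ℝ) : ℂ) * ∑ j ∈ Finset.range N, f (u a N (j + 1) x)

/-- The transfer operator on real-valued functions. -/
def LR (a : ℕ → ℝ) (N : ℕ) (f : ℝ → ℝ) (x : ℝ) : ℝ :=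
  (∑' n : ℕ, (vd a (n + 1) x * f (v a (n + 1) x) + wd a (n + 1) x * f (w a (n + 1) x)))
    + (lenJ a / N) * ∑ j ∈ Finset.range N, f (u a N (j + 1) x)

/-- The part `L_n` of the transfer operator coming from the branches `v_n, w_n`. -/
def Ln (a : ℕ → ℝ) (n : ℕ) (f : ℝ → ℂ) (x : ℝ) : ℂ :=
  (vd a n x : ℂ) * f (v a n x) + (wd a n x : ℂ) * f (w a n x)

/-- Sup norm of `f` on `[0,1)`. -/
def supNorm (f : ℝ → ℂ) : ℝ := ⨆ x : Ico (0:ℝ) 1, ‖f x.1‖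

/-- Best Lipschitz constant of `f` on `[0,1)` (the term at `x = y` is `0/0 = 0`). -/
def lipConst (f : ℝ → ℂ) : ℝ :=
  ⨆ p : Ico (0:ℝ) 1 × Ico (0:ℝ) 1, ‖f p.1.1 - f p.2.1‖ / |p.1.1 - p.2.1|

/-- Lipschitz norm `‖f‖_Lip = sup|f| + Lip(f)` on `[0,1)`. -/
def lipNorm (f : ℝ → ℂ) : ℝ := supNorm f + lipConst f

/-- `f` is bounded and Lipschitz on `[0,1)`. -/
def BddLip (f : ℝ → ℂ) : Prop :=
  ∃ K : ℝ, (∀ x ∈ Ico (0:ℝ) 1, ‖f x‖ ≤ K) ∧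
    ∀ x ∈ Ico (0:ℝ) 1, ∀ y ∈ Ico (0:ℝ) 1, ‖f x - f y‖ ≤ K * |x - y|

/-- The specific choice `a_n = 1/(100 n³)`. -/
def aa (n : ℕ) : ℝ := 1 / (100 * (n : ℝ) ^ 3)

/-- Standing hypotheses on the sequence `(a_n)`: positivity and `∑ a_n < 1/4`. -/
def StdHyp (a : ℕ → ℝ) : Prop :=
  (∀ n : ℕ, 1 ≤ n → 0 < a n) ∧ Summable (fun n : ℕ => a (n + 1)) ∧
    (∑' n : ℕ, a (n + 1)) < 1 / 4

/-- `T : [0,1) → [0,1)` has the maps `v_n, w_n` (`n ≥ 1`) and `u_j` (`1 ≤ j ≤ N`)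
as inverse branches. -/
def InverseBranches (a : ℕ → ℝ) (N : ℕ) (T : ℝ → ℝ) : Prop :=
  MapsTo T (Ico (0:ℝ) 1) (Ico (0:ℝ) 1) ∧
    ∀ x ∈ Ico (0:ℝ) 1,
      (∀ n : ℕ, 1 ≤ n → T (v a n x) = x ∧ T (w a n x) = x) ∧
      (∀ j : ℕ, 1 ≤ j → j ≤ N → T (u a N j x) = x)

/-!
`T⁻¹(A) ∩ [0,1)` is the disjoint union of the images of `A` under the inverse branches, and by
the one-dimensional change of variables the image of `A` under a branch `g` has measure `∫_A g'`.
So `T` preserves Lebesgue measure as soon as the derivatives of all branches sum to `1`. Here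
`v_n' + w_n' = 4 a_n` because `cos² + sin² = 1`, so these branches contribute `b_∞`, and the `N`
affine branches contribute `N · |J|/N = 1 - b_∞`.
-/

open scoped Function Topology

theorem preimage_inter_eq_iUnion_image {α ι : Type*} {T : α → α} {S A : Set α} {g : ι → α → α}
    (hmaps : ∀ i, MapsTo (g i) S S) (hcover : S ⊆ ⋃ i, g i '' S)
    (hT : ∀ i, ∀ x ∈ S, T (g i x) = x) (hAS : A ⊆ S) :
    T ⁻¹' A ∩ S = ⋃ i, g i '' A := by
  ext x
  simp only [mem_inter_iff, mem_preimage, mem_iUnion, mem_image]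
  constructor
  · rintro ⟨hTx, hx⟩
    obtain ⟨i, y, hy, rfl⟩ := mem_iUnion.1 (hcover hx)
    exact ⟨i, y, by rwa [hT i y hy] at hTx, rfl⟩
  · rintro ⟨i, y, hy, rfl⟩
    exact ⟨by rwa [hT i y (hAS hy)], hmaps i (hAS hy)⟩

theorem volume_preimage_inter_eq_of_branches {ι : Type*} [Countable ι] {T : ℝ → ℝ} {S : Set ℝ}
    {g g' : ι → ℝ → ℝ} (hg' : ∀ i x, HasDerivAt (g i) (g' i x) x)
    (hmono : ∀ i, StrictMonoOn (g i) S) (hmaps : ∀ i, MapsTo (g i) S S)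
    (hcover : S ⊆ ⋃ i, g i '' S) (hdisj : Pairwise (Disjoint on fun i => g i '' S))
    (hT : ∀ i, ∀ x ∈ S, T (g i x) = x) (hsum : ∀ x ∈ S, ∑' i, ENNReal.ofReal (g' i x) = 1)
    {A : Set ℝ} (hAS : A ⊆ S) (hA : MeasurableSet A) :
    volume (T ⁻¹' A ∩ S) = volume A := by
  have hmeas : ∀ i, MeasurableSet (g i '' A) := fun i =>
    hA.image_of_continuousOn_injOn (fun x _ => (hg' i x).continuousAt.continuousWithinAt)
      ((hmono i).injOn.mono hAS)
  have hvol : ∀ i, volume (g i '' A) = ∫⁻ x in A, ENNReal.ofReal (g' i x) := fun i =>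
    (lintegral_deriv_eq_volume_image_of_monotoneOn hA (fun x _ => (hg' i x).hasDerivWithinAt)
      ((hmono i).monotoneOn.mono hAS)).symm
  have hg'_meas : ∀ i, Measurable (g' i) := fun i => by
    rw [show g' i = deriv (g i) from funext fun x => (hg' i x).deriv.symm]
    exact measurable_deriv (g i)
  calc volume (T ⁻¹' A ∩ S)
      = ∑' i, volume (g i '' A) := by
        rw [preimage_inter_eq_iUnion_image hmaps hcover hT hAS]
        exact measure_iUnion (fun i j hij => (hdisj hij).mono (image_mono hAS) (image_mono hAS))
          hmeas
    _ = ∫⁻ x in A, ∑' i, ENNReal.ofReal (g' i x) := by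
        rw [lintegral_tsum fun i => (hg'_meas i).ennreal_ofReal.aemeasurable]
        exact tsum_congr hvol
    _ = volume A := by
        rw [setLIntegral_congr_fun hA fun x hx => hsum x (hAS hx), setLIntegral_one]

theorem exists_lt_mem_Ico_succ {α : Type*} [LinearOrder α] {f : ℕ → α} {x : α} (h0 : f 0 ≤ x)
    {m : ℕ} (hm : x < f m) : ∃ n < m, x ∈ Ico (f n) (f (n + 1)) := by
  induction m with
  | zero => exact absurd hm (not_lt.2 h0)
  | succ m ih =>
    rcases lt_or_ge x (f m) with hxm | hxm
    · obtain ⟨n, hn, hx⟩ := ih hxm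
      exact ⟨n, by omega, hx⟩
    · exact ⟨m, by omega, hxm, hm⟩

theorem integral_cos_sq_two_pi_mul_nat {k : ℕ} (hk : k ≠ 0) :
    ∫ t in (0:ℝ)..1, Real.cos (2 * Real.pi * k * t) ^ 2 = 1 / 2 := by
  have hc : 2 * Real.pi * k ≠ 0 := by positivity
  have hsin : Real.sin (2 * Real.pi * k) = 0 := by
    rw [show 2 * Real.pi * k = ((2 * k : ℕ) : ℝ) * Real.pi by push_cast; ring]
    exact Real.sin_nat_mul_pi _
  rw [intervalIntegral.integral_comp_mul_left (fun t => Real.cos t ^ 2) hc, integral_cos_sq]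
  simp only [mul_one, mul_zero, hsin, Real.sin_zero, smul_eq_mul]
  field_simp
  ring

section Branches

variable {a : ℕ → ℝ} {N : ℕ}

theorem continuous_vd (a : ℕ → ℝ) (n : ℕ) : Continuous (vd a n) := by
  unfold vd; fun_prop

theorem continuous_wd (a : ℕ → ℝ) (n : ℕ) : Continuous (wd a n) := by
  unfold wd; fun_prop

theorem vd_add_wd (a : ℕ → ℝ) (n : ℕ) (x : ℝ) : vd a n x + wd a n x = 4 * a n := by
  unfold vd wd
  linear_combination (2 * a n) * Real.sin_sq_add_cos_sq (2 * Real.pi * (n : ℝ) ^ 4 * x)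

theorem vd_pos {n : ℕ} (h : 0 < a n) (x : ℝ) : 0 < vd a n x := by
  unfold vd; positivity

theorem wd_pos {n : ℕ} (h : 0 < a n) (x : ℝ) : 0 < wd a n x := by
  unfold wd; positivity

theorem integral_vd {n : ℕ} (hn : n ≠ 0) : ∫ t in (0:ℝ)..1, vd a n t = 2 * a n := by
  have hcos := integral_cos_sq_two_pi_mul_nat (k := n ^ 4) (by positivity)
  push_cast at hcos
  unfold vd
  rw [intervalIntegral.integral_const_mul, intervalIntegral.integral_add intervalIntegrable_const
    ((by fun_prop : Continuous fun t => 2 * Real.cos (2 * Real.pi * (n : ℝ) ^ 4 * t) ^ 2)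
      |>.intervalIntegrable 0 1), intervalIntegral.integral_const_mul, hcos]
  simp only [intervalIntegral.integral_const, sub_zero, smul_eq_mul]
  ring

theorem integral_wd {n : ℕ} (hn : n ≠ 0) : ∫ t in (0:ℝ)..1, wd a n t = 2 * a n := by
  have hwd : wd a n = fun t => 4 * a n - vd a n t := funext fun t => by
    linarith [vd_add_wd a n t]
  rw [hwd, intervalIntegral.integral_sub intervalIntegrable_const
    ((continuous_vd a n).intervalIntegrable 0 1), integral_vd hn]
  simp only [intervalIntegral.integral_const, sub_zero, smul_eq_mul]
  ring

theorem hasDerivAt_v (a : ℕ → ℝ) (n : ℕ) (x : ℝ) : HasDerivAt (v a n) (vd a n x) x :=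
  ((continuous_vd a n).integral_hasStrictDerivAt 0 x).hasDerivAt.const_add _

theorem hasDerivAt_w (a : ℕ → ℝ) (n : ℕ) (x : ℝ) : HasDerivAt (w a n) (wd a n x) x :=
  ((continuous_wd a n).integral_hasStrictDerivAt 0 x).hasDerivAt.const_add _

theorem hasDerivAt_u (a : ℕ → ℝ) (N j : ℕ) (x : ℝ) : HasDerivAt (u a N j) (lenJ a / N) x := by
  unfold u
  simpa using ((hasDerivAt_id x).const_mul (lenJ a / N)).const_add
    (binf a + ((j : ℝ) - 1) * (lenJ a / N))

theorem continuous_v (a : ℕ → ℝ) (n : ℕ) : Continuous (v a n) :=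
  continuous_iff_continuousAt.2 fun x => (hasDerivAt_v a n x).continuousAt

theorem continuous_w (a : ℕ → ℝ) (n : ℕ) : Continuous (w a n) :=
  continuous_iff_continuousAt.2 fun x => (hasDerivAt_w a n x).continuousAt

theorem continuous_u (a : ℕ → ℝ) (N j : ℕ) : Continuous (u a N j) := by
  unfold u; fun_prop

theorem strictMono_v {n : ℕ} (h : 0 < a n) : StrictMono (v a n) :=
  strictMono_of_hasDerivAt_pos (hasDerivAt_v a n) (vd_pos h)

theorem strictMono_w {n : ℕ} (h : 0 < a n) : StrictMono (w a n) :=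
  strictMono_of_hasDerivAt_pos (hasDerivAt_w a n) (wd_pos h)

theorem strictMono_u (hJ : 0 < lenJ a / N) (j : ℕ) : StrictMono (u a N j) :=
  strictMono_of_hasDerivAt_pos (hasDerivAt_u a N j) fun _ => hJ

theorem b_zero (a : ℕ → ℝ) : b a 0 = 0 := by simp [b]

theorem b_succ (a : ℕ → ℝ) (n : ℕ) : b a (n + 1) = b a n + 4 * a (n + 1) := by
  rw [b, b, Finset.sum_range_succ]; ring

theorem b_mono (hnn : ∀ n, 0 ≤ a (n + 1)) : Monotone (b a) :=
  monotone_nat_of_le_succ fun n => by linarith [b_succ a n, hnn n]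

theorem tendsto_b (hsum : Summable fun n => a (n + 1)) : Tendsto (b a) atTop (𝓝 (binf a)) :=
  hsum.hasSum.tendsto_sum_nat.const_mul 4

theorem binf_nonneg (hnn : ∀ n, 0 ≤ a (n + 1)) (hsum : Summable fun n => a (n + 1)) :
    0 ≤ binf a :=
  b_zero a ▸ (b_mono hnn).ge_of_tendsto (tendsto_b hsum) 0

theorem image_v {n : ℕ} (h : 0 < a (n + 1)) :
    v a (n + 1) '' Ico 0 1 = Ico (b a n) (b a n + 2 * a (n + 1)) := by
  rw [(continuous_v a _).image_Ico_of_strictMono (strictMono_v h)]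
  simp [v, integral_vd]

theorem image_w {n : ℕ} (h : 0 < a (n + 1)) :
    w a (n + 1) '' Ico 0 1 = Ico (b a n + 2 * a (n + 1)) (b a (n + 1)) := by
  rw [(continuous_w a _).image_Ico_of_strictMono (strictMono_w h)]
  simp only [w, intervalIntegral.integral_same, integral_wd n.succ_ne_zero, b_succ,
    Nat.add_sub_cancel]
  congr 1 <;> ring

def gridJ (a : ℕ → ℝ) (N j : ℕ) : ℝ := binf a + j * (lenJ a / N)

theorem gridJ_zero (a : ℕ → ℝ) (N : ℕ) : gridJ a N 0 = binf a := by simp [gridJ]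

theorem gridJ_self (a : ℕ → ℝ) (hN : N ≠ 0) : gridJ a N N = 1 := by
  simp [gridJ, lenJ, field]

theorem strictMono_gridJ (hJ : 0 < lenJ a / N) : StrictMono (gridJ a N) := fun i j hij => by
  unfold gridJ
  gcongr

theorem image_u (hJ : 0 < lenJ a / N) (j : ℕ) :
    u a N (j + 1) '' Ico 0 1 = Ico (gridJ a N j) (gridJ a N (j + 1)) := by
  rw [(continuous_u a N _).image_Ico_of_strictMono (strictMono_u hJ _)]
  simp only [u, gridJ]
  push_cast
  congr 1 <;> ring

def branch (a : ℕ → ℝ) (N : ℕ) : (ℕ × Bool) ⊕ Fin N → ℝ → ℝ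
  | .inl (n, false) => v a (n + 1)
  | .inl (n, true) => w a (n + 1)
  | .inr j => u a N (j + 1)

def branchDeriv (a : ℕ → ℝ) (N : ℕ) : (ℕ × Bool) ⊕ Fin N → ℝ → ℝ
  | .inl (n, false) => vd a (n + 1)
  | .inl (n, true) => wd a (n + 1)
  | .inr _ => fun _ => lenJ a / N

theorem hasDerivAt_branch (a : ℕ → ℝ) (N : ℕ) (i : (ℕ × Bool) ⊕ Fin N) (x : ℝ) :
    HasDerivAt (branch a N i) (branchDeriv a N i x) x := by
  rcases i with ⟨n, _ | _⟩ | j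
  exacts [hasDerivAt_v a _ x, hasDerivAt_w a _ x, hasDerivAt_u a N _ x]

theorem strictMono_branch (hpos : ∀ n, 0 < a (n + 1)) (hJ : 0 < lenJ a / N)
    (i : (ℕ × Bool) ⊕ Fin N) : StrictMono (branch a N i) := by
  rcases i with ⟨n, _ | _⟩ | j
  exacts [strictMono_v (hpos n), strictMono_w (hpos n), strictMono_u hJ _]

theorem image_branch_inl_subset (hpos : ∀ n, 0 < a (n + 1)) (n : ℕ) (t : Bool) :
    branch a N (.inl (n, t)) '' Ico 0 1 ⊆ Ico (b a n) (b a (n + 1)) := by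
  have hmid : b a n ≤ b a n + 2 * a (n + 1) ∧ b a n + 2 * a (n + 1) ≤ b a (n + 1) := by
    constructor <;> linarith [b_succ a n, hpos n]
  cases t
  · exact (image_v (hpos n)).trans_subset (Ico_subset_Ico_right hmid.2)
  · exact (image_w (hpos n)).trans_subset (Ico_subset_Ico_left hmid.1)

theorem Ico_b_subset (hnn : ∀ n, 0 ≤ a (n + 1)) (hsum : Summable fun n => a (n + 1)) (n : ℕ) :
    Ico (b a n) (b a (n + 1)) ⊆ Ico 0 (binf a) :=
  Ico_subset_Ico (b_zero a ▸ b_mono hnn n.zero_le)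
    ((b_mono hnn).ge_of_tendsto (tendsto_b hsum) _)

theorem Ico_gridJ_subset (hJ : 0 < lenJ a / N) (hN : N ≠ 0) {j : ℕ} (hj : j < N) :
    Ico (gridJ a N j) (gridJ a N (j + 1)) ⊆ Ico (binf a) 1 := by
  rw [← gridJ_zero a N, ← gridJ_self a hN]
  exact Ico_subset_Ico ((strictMono_gridJ hJ).monotone j.zero_le)
    ((strictMono_gridJ hJ).monotone hj)

theorem mapsTo_branch (hpos : ∀ n, 0 < a (n + 1)) (hsum : Summable fun n => a (n + 1))
    (hJ : 0 < lenJ a / N) (hN : N ≠ 0) (i : (ℕ × Bool) ⊕ Fin N) :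
    MapsTo (branch a N i) (Ico 0 1) (Ico 0 1) := by
  have hbinf : binf a ≤ 1 := by
    rw [← gridJ_zero a N, ← gridJ_self a hN]; exact (strictMono_gridJ hJ).monotone N.zero_le
  have hnn : ∀ n, 0 ≤ a (n + 1) := fun n => (hpos n).le
  refine (mapsTo_image _ _).mono_right ?_
  rcases i with ⟨n, t⟩ | j
  · exact (image_branch_inl_subset hpos n t).trans
      ((Ico_b_subset hnn hsum n).trans (Ico_subset_Ico_right hbinf))
  · exact (image_u hJ j).trans_subset
      ((Ico_gridJ_subset hJ hN j.isLt).trans (Ico_subset_Ico_left (binf_nonneg hnn hsum)))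

theorem Ico_subset_iUnion_image_branch (hpos : ∀ n, 0 < a (n + 1))
    (hsum : Summable fun n => a (n + 1)) (hJ : 0 < lenJ a / N) (hN : N ≠ 0) :
    Ico 0 1 ⊆ ⋃ i, branch a N i '' Ico 0 1 := by
  rintro x ⟨hx0, hx1⟩
  rw [mem_iUnion]
  rcases lt_or_ge x (binf a) with hxb | hxb
  · obtain ⟨m, hm⟩ := ((tendsto_b hsum).eventually (eventually_gt_nhds hxb)).exists
    obtain ⟨n, -, hn⟩ := exists_lt_mem_Ico_succ (by rwa [b_zero]) hm
    rcases lt_or_ge x (b a n + 2 * a (n + 1)) with hxm | hxm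
    · exact ⟨.inl (n, false), (image_v (hpos n)).symm ▸ ⟨hn.1, hxm⟩⟩
    · exact ⟨.inl (n, true), (image_w (hpos n)).symm ▸ ⟨hxm, hn.2⟩⟩
  · obtain ⟨j, hj, hxj⟩ :=
      exists_lt_mem_Ico_succ (by rwa [gridJ_zero]) (hx1.trans_eq (gridJ_self a hN).symm)
    exact ⟨.inr ⟨j, hj⟩, (image_u hJ j).symm ▸ hxj⟩

theorem pairwise_disjoint_image_branch (hpos : ∀ n, 0 < a (n + 1))
    (hsum : Summable fun n => a (n + 1)) (hJ : 0 < lenJ a / N) (hN : N ≠ 0) :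
    Pairwise (Disjoint on fun i => branch a N i '' Ico 0 1) := by
  have hnn : ∀ n, 0 ≤ a (n + 1) := fun n => (hpos n).le
  have hsplit : ∀ n t (j : Fin N),
      Disjoint (branch a N (.inl (n, t)) '' Ico 0 1) (branch a N (.inr j) '' Ico 0 1) :=
    fun n t j => Ico_disjoint_Ico_same.mono
      ((image_branch_inl_subset hpos n t).trans (Ico_b_subset hnn hsum n))
      ((image_u hJ j).trans_subset (Ico_gridJ_subset hJ hN j.isLt))
  rintro (⟨m, s⟩ | i) (⟨n, t⟩ | j) hne
  · rcases eq_or_ne m n with rfl | hmn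
    · have hst : s ≠ t := fun h => hne (h ▸ rfl)
      have hvw : Disjoint (v a (m + 1) '' Ico 0 1) (w a (m + 1) '' Ico 0 1) := by
        rw [image_v (hpos m), image_w (hpos m)]
        exact Ico_disjoint_Ico_same
      cases s <;> cases t <;> simp only [ne_eq, not_true_eq_false] at hst
      exacts [hvw, hvw.symm]
    · exact ((b_mono hnn).pairwise_disjoint_on_Ico_succ hmn).mono
        (image_branch_inl_subset hpos m s) (image_branch_inl_subset hpos n t)
  · exact hsplit m s j
  · exact (hsplit n t i).symm
  · have hij : (i : ℕ) ≠ j := fun h => hne (congrArg _ (Fin.ext h))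
    simpa only [Function.onFun, branch, image_u hJ, Order.succ_eq_add_one] using
      (strictMono_gridJ hJ).monotone.pairwise_disjoint_on_Ico_succ hij

theorem tsum_ofReal_branchDeriv (hpos : ∀ n, 0 < a (n + 1)) (hsum : Summable fun n => a (n + 1))
    (hJ : 0 ≤ lenJ a) (hN : N ≠ 0) (x : ℝ) :
    ∑' i, ENNReal.ofReal (branchDeriv a N i x) = 1 := by
  have hvw : ∀ n, ∑' t : Bool, ENNReal.ofReal (branchDeriv a N (.inl (n, t)) x)
      = ENNReal.ofReal (4 * a (n + 1)) := fun n => by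
    rw [tsum_fintype, Fintype.sum_bool, branchDeriv, branchDeriv,
      ← ENNReal.ofReal_add (wd_pos (hpos n) x).le (vd_pos (hpos n) x).le, add_comm, vd_add_wd]
  have hu : ∑' _ : Fin N, ENNReal.ofReal (lenJ a / N) = ENNReal.ofReal (lenJ a) := by
    rw [tsum_fintype, Finset.sum_const, Finset.card_univ, Fintype.card_fin, nsmul_eq_mul,
      ← ENNReal.ofReal_natCast, ← ENNReal.ofReal_mul N.cast_nonneg]
    congr 1
    field_simp
  rw [ENNReal.summable.tsum_sum ENNReal.summable, ENNReal.tsum_prod', tsum_congr hvw,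
    ← ENNReal.ofReal_tsum_of_nonneg (fun n => by linarith [hpos n]) (hsum.mul_left 4),
    tsum_mul_left]
  simp only [branchDeriv]
  rw [hu, ← binf, ← ENNReal.ofReal_add (binf_nonneg (fun n => (hpos n).le) hsum) hJ, lenJ,
    add_sub_cancel, ENNReal.ofReal_one]

theorem InverseBranches.apply_branch {T : ℝ → ℝ} (hT : InverseBranches a N T)
    (i : (ℕ × Bool) ⊕ Fin N) {x : ℝ} (hx : x ∈ Ico (0:ℝ) 1) : T (branch a N i x) = x := by
  obtain ⟨-, hbranch⟩ := hT
  rcases i with ⟨n, _ | _⟩ | j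
  · exact ((hbranch x hx).1 (n + 1) n.succ_pos).1
  · exact ((hbranch x hx).1 (n + 1) n.succ_pos).2
  · exact (hbranch x hx).2 (j + 1) (Nat.succ_pos _) j.isLt

end Branches

/-- the map `T` preserves Lebesgue measure: for every Borel set
`A ⊆ [0,1)`, `Leb(T⁻¹(A)) = Leb(A)`. -/
theorem stmt0 (a : ℕ → ℝ) (N : ℕ) (hN : 1 ≤ N) (ha : StdHyp a)
    (T : ℝ → ℝ) (hT : InverseBranches a N T) :
    ∀ A : Set ℝ, A ⊆ Ico (0:ℝ) 1 → MeasurableSet A →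
      volume (T ⁻¹' A ∩ Ico (0:ℝ) 1) = volume A := by
  obtain ⟨hpos, hsum, hlt⟩ := ha
  replace hpos : ∀ n, 0 < a (n + 1) := fun n => hpos (n + 1) n.succ_pos
  replace hN : N ≠ 0 := Nat.one_le_iff_ne_zero.1 hN
  have hJ : 0 < lenJ a := by unfold lenJ binf; linarith
  have hJN : 0 < lenJ a / N := div_pos hJ (Nat.cast_pos.2 (Nat.pos_of_ne_zero hN))
  intro A hAS hA
  exact volume_preimage_inter_eq_of_branches (hasDerivAt_branch a N)
    (fun i => (strictMono_branch hpos hJN i).strictMonoOn _) (mapsTo_branch hpos hsum hJN hN)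
    (Ico_subset_iUnion_image_branch hpos hsum hJN hN)
    (pairwise_disjoint_image_branch hpos hsum hJN hN) (fun i _ hx => hT.apply_branch i hx)
    (fun x _ => tsum_ofReal_branchDeriv hpos hsum hJ.le hN x) hAS hA

end Gouezel
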